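/- Let (X_k) be a family of Banach spaces each of which is weak*-sequentially dense in its bidual, and let 1 < p < ∞. Then the ℓ^p-direct sum ⊕_{ℓ^p} X_k is weak*-sequentially dense in its bidual ⊕_{ℓ^p} X_k**. -/

import Mathlib

open NormedSpace Filter Topology
open scoped ENNReal

noncomputable section

/-- The annihilator of a subspace `Y ⊆ X` inside the continuous dual of `X`. -/
def annih {X : Type*} [SeminormedAddCommGroup X] [NormedSpace ℝ X] (Y : Submodule ℝ X) :
    Submodule ℝ (StrongDual ℝ X) where
  carrier := {f | ∀ y ∈ Y, f y = 0}
  add_mem' := by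
    intro a b ha hb y hy
    simp [ContinuousLinearMap.add_apply, ha y hy, hb y hy]
  zero_mem' := by intro y hy; rfl
  smul_mem' := by
    intro c f hf y hy
    simp [hf y hy]

/-- A Banach space is reflexive iff the canonical embedding into its bidual is surjective. -/
def BReflexive (X : Type*) [SeminormedAddCommGroup X] [NormedSpace ℝ X] : Prop :=
  Function.Surjective (inclusionInDoubleDual ℝ X)

/-- A Banach space is coreflexive iff `X**/J_X(X)` is reflexive. -/
def Coreflexive (X : Type*) [SeminormedAddCommGroup X] [NormedSpace ℝ X] : Prop :=
  @BReflexive ((StrongDual ℝ (StrongDual ℝ X)) ⧸ LinearMap.range (inclusionInDoubleDual ℝ X).toLinearMap)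
    (Submodule.Quotient.seminormedAddCommGroup (M := StrongDual ℝ (StrongDual ℝ X)) (R := ℝ) _)
    (Submodule.Quotient.normedSpace (M := StrongDual ℝ (StrongDual ℝ X)) (R := ℝ) _ ℝ)

/-- The adjoint of a continuous linear map between normed spaces. -/
def adj {E F : Type*} [SeminormedAddCommGroup E] [NormedSpace ℝ E]
    [SeminormedAddCommGroup F] [NormedSpace ℝ F] (f : E →L[ℝ] F) :
    StrongDual ℝ F →L[ℝ] StrongDual ℝ E :=
  (ContinuousLinearMap.compL ℝ E F ℝ).flip f

/-- `X` is weak*-sequentially dense in its bidual. -/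
def WStarSeqDense (X : Type*) [SeminormedAddCommGroup X] [NormedSpace ℝ X] : Prop :=
  ∀ F : StrongDual ℝ (StrongDual ℝ X), ∃ x : ℕ → X, ∀ f : StrongDual ℝ X,
    Tendsto (fun n => inclusionInDoubleDual ℝ X (x n) f) atTop (𝓝 (F f))

/-- `x` is a point of weak-to-norm continuity of the closed unit ball of `X`. -/
def wPC (X : Type*) [SeminormedAddCommGroup X] [NormedSpace ℝ X] (x : X) : Prop :=
  ∀ l : Filter X, (∀ᶠ y in l, ‖y‖ ≤ 1) →
    (∀ f : StrongDual ℝ X, Tendsto (fun y => f y) l (𝓝 (f x))) →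
    Tendsto id l (𝓝 x)

/-!
Given `F` in the bidual of `ℓ^p(X_k)`, its coordinates `F_k = F ∘ π_kᵀ` lie in `X_k**` and
satisfy `∑ ‖F_k‖^p ≤ ‖F‖^p`. Each `F_k` is the weak* limit of a sequence in `X_k`, and passing to
convex combinations of tails (Hahn–Banach) this sequence can be taken of norm `< ‖F_k‖ + 2⁻ᵏ`.
The diagonal vectors `z_m = ∑_{k<m} e_k (y_k m)` then converge weak* to `F`: since `p < ∞`, every
`f ∈ (ℓ^p)*` is the norm-convergent sum of its coordinate functionals `f_k ∘ π_k`, with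
`∑ ‖f_k‖^q < ∞`, so `F f = ∑ F_k f_k`; and `f z_m = ∑_{k<m} f_k (y_k m)` converges to that series
by dominated convergence, Hölder's inequality making the bound `‖f_k‖ (‖F_k‖ + 2⁻ᵏ)` summable.
-/

theorem tendsto_of_mem_convexHull_image_Ici {F : Type*} [SeminormedAddCommGroup F]
    [NormedSpace ℝ F] {a b : ℕ → F} {L : F} (ha : Tendsto a atTop (𝓝 L))
    (hb : ∀ m, b m ∈ convexHull ℝ (a '' Set.Ici m)) : Tendsto b atTop (𝓝 L) := by
  rw [Metric.tendsto_atTop] at ha ⊢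
  intro ε hε
  obtain ⟨N, hN⟩ := ha ε hε
  refine ⟨N, fun m hm => convexHull_min ?_ (convex_ball L ε) (hb m)⟩
  rintro _ ⟨n, hn, rfl⟩
  exact hN n (hm.trans hn)

section WeakStarLimits

variable {E : Type*} [NormedAddCommGroup E] [NormedSpace ℝ E]
  {x : ℕ → E} {Φ : StrongDual ℝ (StrongDual ℝ E)} {r : ℝ}

theorem exists_mem_convexHull_image_Ici_norm_lt
    (hx : ∀ g : StrongDual ℝ E, Tendsto (fun n => g (x n)) atTop (𝓝 (Φ g)))
    (hr : ‖Φ‖ < r) (m : ℕ) : ∃ y ∈ convexHull ℝ (x '' Set.Ici m), ‖y‖ < r := by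
  by_contra! h
  have hdisj : Disjoint (Metric.ball (0 : E) r) (convexHull ℝ (x '' Set.Ici m)) :=
    Set.disjoint_left.2 fun y hy hy' => (h y hy').not_gt (mem_ball_zero_iff.1 hy)
  obtain ⟨g, s, hg_ball, hg_hull⟩ := geometric_hahn_banach_open (convex_ball 0 r)
    Metric.isOpen_ball (convex_convexHull ℝ _) hdisj
  obtain ⟨ρ, hΦρ, hρr⟩ := exists_between hr
  have hρ : 0 < ρ := (norm_nonneg Φ).trans_lt hΦρ
  have hg_lt : ∀ z : E, ‖z‖ ≤ ρ → g z < s := fun z hz =>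
    hg_ball z (mem_ball_zero_iff.2 (by linarith))
  have hs : 0 < s := by simpa using hg_lt 0 (by simpa using hρ.le)
  have hg_norm : ‖g‖ ≤ s / ρ := g.opNorm_bound_of_ball_bound hρ s fun z hz => by
    rw [mem_closedBall_zero_iff] at hz
    rw [Real.norm_eq_abs]
    have := hg_lt (-z) (by rwa [norm_neg])
    rw [map_neg] at this
    exact abs_le.2 ⟨by linarith, (hg_lt z hz).le⟩
  have hs_le : s ≤ Φ g := ge_of_tendsto (hx g) (eventually_atTop.2
    ⟨m, fun n hn => hg_hull _ (subset_convexHull ℝ _ ⟨n, hn, rfl⟩)⟩)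
  have : Φ g < s := calc
    Φ g ≤ ‖Φ‖ * ‖g‖ := (le_abs_self _).trans (Φ.le_opNorm g)
    _ ≤ ‖Φ‖ * (s / ρ) := by gcongr
    _ < ρ * (s / ρ) := by gcongr
    _ = s := mul_div_cancel₀ s hρ.ne'
  exact this.not_ge hs_le

theorem exists_seq_norm_lt_tendsto_of_tendsto
    (hx : ∀ g : StrongDual ℝ E, Tendsto (fun n => g (x n)) atTop (𝓝 (Φ g)))
    (hr : ‖Φ‖ < r) : ∃ y : ℕ → E, (∀ m, ‖y m‖ < r) ∧
      ∀ g : StrongDual ℝ E, Tendsto (fun m => g (y m)) atTop (𝓝 (Φ g)) := by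
  choose y hy_mem hy_norm using exists_mem_convexHull_image_Ici_norm_lt hx hr
  refine ⟨y, hy_norm, fun g => tendsto_of_mem_convexHull_image_Ici (hx g) fun m => ?_⟩
  have := Set.mem_image_of_mem (g : E →ₗ[ℝ] ℝ) (hy_mem m)
  rwa [LinearMap.image_convexHull, ← Set.image_comp] at this

theorem WStarSeqDense.exists_seq_norm_lt_tendsto (hE : WStarSeqDense E)
    (Φ : StrongDual ℝ (StrongDual ℝ E)) (hr : ‖Φ‖ < r) : ∃ y : ℕ → E, (∀ m, ‖y m‖ < r) ∧
      ∀ g : StrongDual ℝ E, Tendsto (fun m => g (y m)) atTop (𝓝 (Φ g)) :=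
  let ⟨_, hx⟩ := hE Φ
  exists_seq_norm_lt_tendsto_of_tendsto hx hr

end WeakStarLimits

theorem exists_norm_le_one_lt_apply {E : Type*} [NormedAddCommGroup E] [NormedSpace ℝ E]
    (ψ : StrongDual ℝ E) {c : ℝ} (hc : c < ‖ψ‖) : ∃ y : E, ‖y‖ ≤ 1 ∧ c < ψ y := by
  obtain ⟨y, hy, hcy⟩ := ψ.exists_lt_apply_of_lt_opNorm hc
  rcases le_or_gt 0 (ψ y) with h | h
  · exact ⟨y, hy.le, by rwa [Real.norm_eq_abs, abs_of_nonneg h] at hcy⟩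
  · refine ⟨-y, by rw [norm_neg]; exact hy.le, ?_⟩
    rwa [map_neg, ← abs_of_neg h, ← Real.norm_eq_abs]

theorem sum_opNorm_le_of_forall_sum_apply_le {ι : Type*} {Y : ι → Type*}
    [∀ k, NormedAddCommGroup (Y k)] [∀ k, NormedSpace ℝ (Y k)] (s : Finset ι)
    (ψ : ∀ k, StrongDual ℝ (Y k)) {C : ℝ}
    (h : ∀ y : ∀ k, Y k, (∀ k, ‖y k‖ ≤ 1) → ∑ k ∈ s, ψ k (y k) ≤ C) :
    ∑ k ∈ s, ‖ψ k‖ ≤ C := by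
  refine le_of_forall_pos_le_add fun ε hε => ?_
  set δ := ε / (s.card + 1)
  have hδ : 0 < δ := by positivity
  choose y hy_norm hy_lt using fun k => exists_norm_le_one_lt_apply (ψ k) (sub_lt_self ‖ψ k‖ hδ)
  have hcard : s.card * δ ≤ ε := by
    rw [mul_div_assoc', div_le_iff₀ (by positivity)]
    nlinarith
  calc ∑ k ∈ s, ‖ψ k‖ = ∑ k ∈ s, (‖ψ k‖ - δ) + s.card * δ := by
        rw [Finset.sum_sub_distrib, Finset.sum_const, nsmul_eq_mul]; ring
    _ ≤ ∑ k ∈ s, ψ k (y k) + s.card * δ := by gcongr with k; exact (hy_lt k).le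
    _ ≤ C + ε := add_le_add (h y hy_norm) hcard

theorem Real.rpow_le_of_le_mul_rpow {S C r r' : ℝ} (hr : r.HolderConjugate r') (hS : 0 ≤ S)
    (hC : 0 ≤ C) (h : S ≤ C * S ^ (1 / r)) : S ≤ C ^ r' := by
  rcases hS.eq_or_lt with rfl | hS
  · positivity
  have hsplit : S ^ (1 / r) * S ^ (1 / r') = S := by
    rw [← Real.rpow_add hS, one_div, one_div, hr.inv_add_inv_eq_one, Real.rpow_one]
  have hS' : S ^ (1 / r') ≤ C := by
    refine le_of_mul_le_mul_left ?_ (Real.rpow_pos_of_pos hS (1 / r))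
    rw [hsplit, mul_comm]
    exact h
  calc S = (S ^ (1 / r')) ^ r' := by
        rw [← Real.rpow_mul hS.le, one_div_mul_cancel hr.symm.ne_zero, Real.rpow_one]
    _ ≤ C ^ r' := Real.rpow_le_rpow (by positivity) hS' hr.symm.pos.le

theorem sum_rpow_opNorm_comp_le {E : Type*} [SeminormedAddCommGroup E] [NormedSpace ℝ E]
    {ι : Type*} {Y : ι → Type*} [∀ k, NormedAddCommGroup (Y k)] [∀ k, NormedSpace ℝ (Y k)]
    {r r' : ℝ} (hr : r.HolderConjugate r') (T : ∀ k, Y k →L[ℝ] E) (s : Finset ι)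
    (hT : ∀ y : ∀ k, Y k, ‖∑ k ∈ s, T k (y k)‖ ≤ (∑ k ∈ s, ‖y k‖ ^ r) ^ (1 / r))
    (φ : StrongDual ℝ E) :
    ∑ k ∈ s, ‖φ.comp (T k)‖ ^ r' ≤ ‖φ‖ ^ r' := by
  set t := fun k => ‖φ.comp (T k)‖
  have ht : ∀ k, 0 ≤ t k := fun k => norm_nonneg _
  -- the weights `t k ^ (r' - 1)` are the extremisers of Hölder's inequality
  have hweight : ∀ k, t k ^ (r' - 1) * t k = t k ^ r' := fun k => by
    rw [← Real.rpow_add_one' (ht k) (by simpa using hr.symm.ne_zero), sub_add_cancel]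
  have hweight_pow : ∀ k, (t k ^ (r' - 1)) ^ r = t k ^ r' := fun k => by
    rw [← Real.rpow_mul (ht k), hr.symm.sub_one_mul_conj]
  have hr_inv : 0 ≤ 1 / r := one_div_nonneg.2 hr.pos.le
  refine Real.rpow_le_of_le_mul_rpow hr (by positivity) (norm_nonneg φ) ?_
  have := sum_opNorm_le_of_forall_sum_apply_le s (fun k => t k ^ (r' - 1) • φ.comp (T k))
    (C := ‖φ‖ * (∑ k ∈ s, t k ^ r') ^ (1 / r)) fun y hy => calc
      ∑ k ∈ s, (t k ^ (r' - 1) • φ.comp (T k)) (y k)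
          = φ (∑ k ∈ s, T k (t k ^ (r' - 1) • y k)) := by simp [map_sum]
      _ ≤ ‖φ‖ * ‖∑ k ∈ s, T k (t k ^ (r' - 1) • y k)‖ := (le_abs_self _).trans (φ.le_opNorm _)
      _ ≤ ‖φ‖ * (∑ k ∈ s, ‖t k ^ (r' - 1) • y k‖ ^ r) ^ (1 / r) := by gcongr; exact hT _
      _ ≤ ‖φ‖ * (∑ k ∈ s, t k ^ r') ^ (1 / r) := by
        gcongr with k
        rw [← hweight_pow k, norm_smul, Real.norm_of_nonneg (by positivity)]
        exact Real.rpow_le_rpow (by positivity)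
          (mul_le_of_le_one_right (Real.rpow_nonneg (ht k) _) (hy k)) hr.pos.le
  convert this using 2 with k
  rw [norm_smul, Real.norm_of_nonneg (Real.rpow_nonneg (ht k) _), hweight]

theorem summable_of_norm_sum_le_rpow {ι E : Type*} [NormedAddCommGroup E] [CompleteSpace E]
    {f : ι → E} {g : ι → ℝ} (hg_nonneg : ∀ i, 0 ≤ g i) (hg : Summable g) {r : ℝ} (hr : 0 < r)
    (hfg : ∀ s : Finset ι, ‖∑ i ∈ s, f i‖ ≤ (∑ i ∈ s, g i) ^ r) : Summable f := by
  refine summable_iff_vanishing_norm.2 fun ε hε => ?_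
  obtain ⟨s, hs⟩ := summable_iff_vanishing_norm.1 hg (ε ^ (1 / r)) (by positivity)
  refine ⟨s, fun t hts => (hfg t).trans_lt ?_⟩
  have hgt := hs t hts
  rw [Real.norm_of_nonneg (Finset.sum_nonneg fun i _ => hg_nonneg i)] at hgt
  calc (∑ i ∈ t, g i) ^ r < (ε ^ (1 / r)) ^ r := by
        gcongr
        exact Finset.sum_nonneg fun i _ => hg_nonneg i
    _ = ε := by rw [← Real.rpow_mul hε.le, one_div_mul_cancel hr.ne', Real.rpow_one]

theorem tendsto_sum_range_of_dominated {G : Type*} [NormedAddCommGroup G] [CompleteSpace G]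
    {a : ℕ → ℕ → G} {L : ℕ → G} {bound : ℕ → ℝ} (h_sum : Summable bound)
    (h_lim : ∀ k, Tendsto (fun m => a m k) atTop (𝓝 (L k)))
    (h_bound : ∀ m k, ‖a m k‖ ≤ bound k) :
    Tendsto (fun m => ∑ k ∈ Finset.range m, a m k) atTop (𝓝 (∑' k, L k)) := by
  have := tendsto_tsum_of_dominated_convergence (f := fun m k => if k < m then a m k else 0)
    h_sum (fun k => (h_lim k).congr' ((eventually_gt_atTop k).mono fun m hm => (if_pos hm).symm))
    (Eventually.of_forall fun m k => by
      split_ifs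
      · exact h_bound m k
      · exact (norm_zero (E := G)).trans_le ((norm_nonneg _).trans (h_bound 0 k)))
  refine this.congr fun m => ?_
  rw [tsum_eq_sum (s := Finset.range m) fun k hk => if_neg (by simpa using hk)]
  exact Finset.sum_congr rfl fun k hk => if_pos (Finset.mem_range.1 hk)

namespace lp

variable {ι : Type*} {X : ι → Type*} [∀ k, NormedAddCommGroup (X k)] {p : ℝ≥0∞} [Fact (1 ≤ p)]

theorem norm_sum_single_eq [DecidableEq ι] (hp : 0 < p.toReal) (y : ∀ k, X k) (s : Finset ι) :
    ‖∑ k ∈ s, lp.single p k (y k)‖ = (∑ k ∈ s, ‖y k‖ ^ p.toReal) ^ (1 / p.toReal) := by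
  rw [← lp.norm_sum_single hp, one_div, Real.rpow_rpow_inv (norm_nonneg _) hp.ne']

variable [∀ k, NormedSpace ℝ (X k)] {q : ℝ}

theorem norm_sum_adj_evalCLM_le (hpq : p.toReal.HolderConjugate q)
    (g : ∀ k, StrongDual ℝ (X k)) (s : Finset ι) :
    ‖∑ k ∈ s, adj (evalCLM ℝ X p k) (g k)‖ ≤ (∑ k ∈ s, ‖g k‖ ^ q) ^ (1 / q) := by
  refine ContinuousLinearMap.opNorm_le_bound _ (by positivity) fun x => ?_
  calc ‖(∑ k ∈ s, adj (evalCLM ℝ X p k) (g k)) x‖ = ‖∑ k ∈ s, g k (x k)‖ := by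
        simp [adj, evalCLM]
    _ ≤ ∑ k ∈ s, ‖g k‖ * ‖x k‖ := norm_sum_le_of_le s fun k _ => (g k).le_opNorm _
    _ ≤ (∑ k ∈ s, ‖g k‖ ^ q) ^ (1 / q) * (∑ k ∈ s, ‖x k‖ ^ p.toReal) ^ (1 / p.toReal) :=
        Real.inner_le_Lp_mul_Lq_of_nonneg s hpq.symm (fun k _ => norm_nonneg _)
          fun k _ => norm_nonneg _
    _ ≤ (∑ k ∈ s, ‖g k‖ ^ q) ^ (1 / q) * ‖x‖ := by
        gcongr
        calc _ ≤ (‖x‖ ^ p.toReal) ^ (1 / p.toReal) := by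
              gcongr; exact lp.sum_rpow_le_norm_rpow hpq.pos x s
          _ = ‖x‖ := by rw [one_div, Real.rpow_rpow_inv (norm_nonneg _) hpq.pos.ne']

theorem summable_rpow_norm_comp_adj_evalCLM (hpq : p.toReal.HolderConjugate q)
    (F : StrongDual ℝ (StrongDual ℝ (lp X p))) :
    Summable fun k => ‖F.comp (adj (evalCLM ℝ X p k))‖ ^ p.toReal :=
  summable_of_sum_le (fun k => by positivity) fun s =>
    sum_rpow_opNorm_comp_le hpq.symm (fun k => adj (evalCLM ℝ X p k)) s
      (norm_sum_adj_evalCLM_le hpq · s) F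

variable [DecidableEq ι]

theorem norm_comp_single_le (f : StrongDual ℝ (lp X p)) (k : ι) :
    ‖f.comp (singleContinuousLinearMap ℝ X p k)‖ ≤ ‖f‖ :=
  ContinuousLinearMap.opNorm_le_bound _ (norm_nonneg f) fun y => (f.le_opNorm _).trans_eq <|
    congrArg _ (lp.norm_single (zero_lt_one.trans_le Fact.out) k y)

theorem summable_rpow_norm_comp_single (hpq : p.toReal.HolderConjugate q)
    (f : StrongDual ℝ (lp X p)) :
    Summable fun k => ‖f.comp (singleContinuousLinearMap ℝ X p k)‖ ^ q :=
  summable_of_sum_le (fun k => by positivity) fun s =>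
    sum_rpow_opNorm_comp_le hpq (fun k => singleContinuousLinearMap ℝ X p k) s
      (fun y => (norm_sum_single_eq hpq.pos y s).le) f

theorem hasSum_adj_evalCLM_comp_single (hpq : p.toReal.HolderConjugate q)
    (f : StrongDual ℝ (lp X p)) :
    HasSum (fun k => adj (evalCLM ℝ X p k) (f.comp (singleContinuousLinearMap ℝ X p k))) f := by
  have hp : p ≠ ⊤ := (ENNReal.toReal_pos_iff.1 hpq.pos).2.ne
  obtain ⟨φ, hφ⟩ : Summable fun k =>
      adj (evalCLM ℝ X p k) (f.comp (singleContinuousLinearMap ℝ X p k)) :=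
    summable_of_norm_sum_le_rpow (fun k => by positivity)
    (summable_rpow_norm_comp_single hpq f) (one_div_pos.2 hpq.symm.pos)
    (norm_sum_adj_evalCLM_le hpq _)
  convert hφ
  ext x
  exact ((lp.hasSum_single hp x).mapL f).unique (hφ.mapL (ContinuousLinearMap.apply ℝ ℝ x))

end lp

theorem stmt8_general (X : ℕ → Type*) [∀ k, NormedAddCommGroup (X k)] [∀ k, NormedSpace ℝ (X k)]
    (p : ℝ≥0∞) [Fact (1 ≤ p)] (hp1 : 1 < p) (hp2 : p ≠ ⊤)
    (hX : ∀ k, WStarSeqDense (X k)) :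
    WStarSeqDense (lp X p) := by
  have hpq : p.toReal.HolderConjugate p.toReal.conjExponent :=
    .conjExponent (by simpa using ENNReal.toReal_strict_mono hp2 hp1)
  intro F
  set Fk := fun k => F.comp (adj (lp.evalCLM ℝ X p k))
  choose y hy_norm hy_lim using fun k => (hX k).exists_seq_norm_lt_tendsto (Fk k)
    (lt_add_of_pos_right ‖Fk k‖ (pow_pos one_half_pos k))
  refine ⟨fun m => ∑ k ∈ Finset.range m, lp.single p k (y k m), fun f => ?_⟩
  set fk := fun k => f.comp (lp.singleContinuousLinearMap ℝ X p k)
  have hFf : F f = ∑' k, Fk k (fk k) :=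
    ((lp.hasSum_adj_evalCLM_comp_single hpq f).mapL F).tsum_eq.symm
  show Tendsto (fun m => f (∑ k ∈ Finset.range m, lp.single p k (y k m))) atTop (𝓝 (F f))
  simp only [map_sum, hFf]
  have hbound : Summable fun k => ‖Fk k‖ * ‖fk k‖ + ‖f‖ * (1 / 2) ^ k :=
    (Real.summable_mul_of_Lp_Lq_of_nonneg (f := fun k => ‖Fk k‖) (g := fun k => ‖fk k‖) hpq
      (fun k => norm_nonneg (Fk k)) (fun k => norm_nonneg (fk k))
      (lp.summable_rpow_norm_comp_adj_evalCLM hpq F) (lp.summable_rpow_norm_comp_single hpq f)).add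
      (summable_geometric_two.mul_left ‖f‖)
  refine tendsto_sum_range_of_dominated hbound (fun k => hy_lim k (fk k)) fun m k => ?_
  calc ‖fk k (y k m)‖ ≤ ‖fk k‖ * (‖Fk k‖ + (1 / 2) ^ k) := (fk k).le_opNorm_of_le (hy_norm k m).le
    _ ≤ ‖Fk k‖ * ‖fk k‖ + ‖f‖ * (1 / 2) ^ k := by
      rw [mul_add, mul_comm]
      gcongr
      exact lp.norm_comp_single_le f k

theorem stmt8 (X : ℕ → Type*) [∀ k, NormedAddCommGroup (X k)] [∀ k, NormedSpace ℝ (X k)]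
    [∀ k, CompleteSpace (X k)] (p : ℝ≥0∞) [Fact (1 ≤ p)] (hp1 : 1 < p) (hp2 : p ≠ ⊤)
    (hX : ∀ k, WStarSeqDense (X k)) :
    WStarSeqDense (lp X p) :=
  stmt8_general X p hp1 hp2 hX
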